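/- Let p be an odd prime and suppose L_p is embedded in a harmonic matroid M. For any point of P written in homogeneous coordinates [x,y,z] (i.e., [1,s,-k] with x=1,y=s,z=-k, or [0,l,1] with x=0,y=l,z=1, or [0,1,0]) and any set ⟨a,b,c⟩ among ⟨0,0,1⟩, ⟨1,0,k⟩ (k ∈ Z_p), and ⟨j,-1,i⟩ (i,j ∈ Z_p): the point [x,y,z] belongs to ⟨a,b,c⟩ if and only if ax + by + cz = 0 in Z_p. -/

import Mathlib

/-!
The key lemma puts `[1,s,-k]` on every line `⟨s+kt,-1,t⟩` of a pencil, and the whole statement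
reduces to the converse: `[1,s,-k] ∈ ⟨j,-1,i⟩ ↔ s = j - ki`. This recovers `s` and `k` from the
point, which settles its incidences with `⟨0,0,1⟩` and `⟨1,0,k⟩`; the points `[0,l,1]` and `[0,1,0]`
are handled by `L_p` itself, since `⟨j,-1,i⟩` lies in the rank-2 closure of `⟨j,-1,i⟩_p`.
-/

open Set

namespace HarmonicPaper

variable {α : Type*}

/-- Extended rank of a set in a matroid: supremum of cardinalities of independent subsets. -/
noncomputable def eRk (M : Matroid α) (S : Set α) : ℕ∞ :=
  ⨆ I ∈ {I : Set α | M.Indep I ∧ I ⊆ S}, I.encard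

/-- A set of points is collinear if it has rank at most 2. -/
def Collin (M : Matroid α) (S : Set α) : Prop := eRk M S ≤ 2

/-- The six collinear triples of the non-Fano configuration on `y,x,z,o,q,r,s`. -/
def nonFanoLines (y x z o q r s : α) : Set (Set α) :=
  {{y, x, z}, {y, o, q}, {y, r, s}, {z, o, s}, {z, q, r}, {x, q, s}}

/-- `HP M y x z o q r s` : the restriction of `M` to the seven pairwise distinct points
`y,x,z,o,q,r,s` is a simple rank-3 matroid whose collinear triples are exactly those of the
non-Fano matroid `F₇⁻`, or exactly those together with `{x,o,r}` (the Fano matroid `F₇`). -/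
def HP (M : Matroid α) (y x z o q r s : α) : Prop :=
  List.Pairwise (· ≠ ·) [y, x, z, o, q, r, s] ∧
  ({y, x, z, o, q, r, s} : Set α) ⊆ M.E ∧
  eRk M {y, x, z, o, q, r, s} = 3 ∧
  (∀ a ∈ ({y, x, z, o, q, r, s} : Set α), ∀ b ∈ ({y, x, z, o, q, r, s} : Set α),
    a ≠ b → eRk M {a, b} = 2) ∧
  ((∀ a ∈ ({y, x, z, o, q, r, s} : Set α), ∀ b ∈ ({y, x, z, o, q, r, s} : Set α),
      ∀ c ∈ ({y, x, z, o, q, r, s} : Set α), a ≠ b → a ≠ c → b ≠ c →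
      (Collin M {a, b, c} ↔ ({a, b, c} : Set α) ∈ nonFanoLines y x z o q r s)) ∨
   (∀ a ∈ ({y, x, z, o, q, r, s} : Set α), ∀ b ∈ ({y, x, z, o, q, r, s} : Set α),
      ∀ c ∈ ({y, x, z, o, q, r, s} : Set α), a ≠ b → a ≠ c → b ≠ c →
      (Collin M {a, b, c} ↔
        ({a, b, c} : Set α) ∈ insert {x, o, r} (nonFanoLines y x z o q r s))))

/-- `Hc M y z x x'` : `x'` is a harmonic conjugate of `x` with respect to `y` and `z`. -/
def Hc (M : Matroid α) (y z x x' : α) : Prop :=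
  ∃ o q r s, HP M y x z o q r s ∧ M.closure {y, z} ∩ M.closure {o, r} = {x'}

/-- A matroid is harmonic if every harmonic configuration `HP` yields a (unique) harmonic
conjugate, which moreover depends only on `x, y, z` and not on the choice of `o,q,r,s`. -/
def IsHarmonic (M : Matroid α) : Prop :=
  (∀ y x z o q r s, HP M y x z o q r s →
    ∃ x', M.closure {y, z} ∩ M.closure {o, r} = {x'}) ∧
  (∀ y x z o q r s o' q' r' s', HP M y x z o q r s → HP M y x z o' q' r' s' →
    M.closure {y, z} ∩ M.closure {o, r} = M.closure {y, z} ∩ M.closure {o', r'})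

/-- One step of harmonic closure. -/
def hStep (M : Matroid α) (S : Set α) : Set α :=
  S ∪ {x | ∃ a ∈ S, ∃ b ∈ S, ∃ c ∈ S, Hc M a c b x}

/-- Iterated harmonic closure steps. -/
def hIter (M : Matroid α) : ℕ → Set α → Set α
  | 0, S => S
  | n + 1, S => hStep M (hIter M n S)

/-- The harmonic closure `h^∞(S)`. -/
def hCl (M : Matroid α) (S : Set α) : Set α := ⋃ n, hIter M n S

end HarmonicPaper
namespace HarmonicPaper

variable {α : Type*}

/-- The points of the matroid `L_p`: `A i = [0,i,1]`, `B i = [1,i,1]`, `C i = [1,i,0]`,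
and `V = [0,1,0]`. -/
inductive LpPoint (p : ℕ) : Type
  | A : ZMod p → LpPoint p
  | B : ZMod p → LpPoint p
  | C : ZMod p → LpPoint p
  | V : LpPoint p

open LpPoint

/-- The lines (maximal collinear sets of size ≥ 3) of `L_p`:
`⟨1,0,0⟩_p`, `⟨1,0,-1⟩_p`, `⟨0,0,1⟩_p`, and `⟨j,-1,i⟩_p = {[0,i,1],[1,i+j,1],[1,j,0]}`. -/
def LpLines (p : ℕ) : Set (Set (LpPoint p)) :=
  {S | S = {x | ∃ i, x = A i} ∪ {V} ∨ S = {x | ∃ i, x = B i} ∪ {V} ∨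
       S = {x | ∃ i, x = C i} ∪ {V} ∨ ∃ i j, S = {A i, B (i + j), C j}}

/-- Independence in the rank-3 simple matroid `L_p`: any set of at most two points is
independent, and a three-point set is independent iff it lies on no line. -/
def LpIndep (p : ℕ) (S : Set (LpPoint p)) : Prop :=
  S.encard ≤ 2 ∨ (S.encard = 3 ∧ ∀ L ∈ LpLines p, ¬ S ⊆ L)

/-- An embedding of `L_p` in the matroid `M`: an injection of the ground set of `L_p` into
the points of `M` under which independence is preserved and reflected. -/
def IsLpEmbedding (p : ℕ) (M : Matroid α) (f : LpPoint p → α) : Prop :=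
  Function.Injective f ∧ Set.range f ⊆ M.E ∧
  ∀ S : Set (LpPoint p), LpIndep p S ↔ M.Indep (f '' S)

/-- `⟨j,-1,i⟩ := h^∞(⟨j,-1,i⟩_p)`, the harmonic closure in `M` of the line
`{[0,i,1], [1,i+j,1], [1,j,0]}` of `L_p`. -/
def lineJI {p : ℕ} (M : Matroid α) (f : LpPoint p → α) (j i : ZMod p) : Set α :=
  hCl M (f '' {A i, B (i + j), C j})

/-- The family of points `[1,s,-k]` (`g s k` denotes `[1,s,-k]`) produced by the key lemma:
it agrees with the like-named points `[1,s,0]` and `[1,s,1]` of `L_p` and satisfies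
properties (i) and (ii) of the key lemma. -/
def IsKeyFamily {p : ℕ} (M : Matroid α) (f : LpPoint p → α)
    (g : ZMod p → ZMod p → α) : Prop :=
  (∀ s, g s 0 = f (C s)) ∧ (∀ s, g s (-1) = f (B s)) ∧
  (∀ k i j : ZMod p, (⋂ t : ZMod p, lineJI M f (j + k * t) (i + t)) = {g (j - k * i) k}) ∧
  (∀ k i j t : ZMod p, Collin M {f (A (i + t)), f (C (j + k * t)), g (j - k * i) k})

/-- `C(j,i) = {[0,i,1]} ∪ {[1,j-ki,-k] : k ∈ Z_p}`. -/
def cSet {p : ℕ} (f : LpPoint p → α) (g : ZMod p → ZMod p → α) (j i : ZMod p) : Set α :=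
  insert (f (A i)) {x | ∃ k : ZMod p, x = g (j - k * i) k}

/-- The point set `P = {[1,s,-k]} ∪ {[0,i,1]} ∪ {[0,1,0]}`. -/
def pSet {p : ℕ} (f : LpPoint p → α) (g : ZMod p → ZMod p → α) : Set α :=
  {x | ∃ s k, x = g s k} ∪ {x | ∃ i, x = f (A i)} ∪ {f V}

/-- The line family `𝓛₁ = {⟨0,0,1⟩} ∪ {⟨1,0,k⟩ : k ∈ Z_p}`, where
`⟨0,0,1⟩ = {[1,t,0] : t} ∪ {[0,1,0]}`, `⟨1,0,0⟩ = {[0,t,1] : t} ∪ {[0,1,0]}` and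
`⟨1,0,k⟩ = {[1,t,-k⁻¹] : t} ∪ {[0,1,0]}` for `k ≠ 0`. -/
def lFam1 {p : ℕ} [Fact p.Prime] (f : LpPoint p → α) (g : ZMod p → ZMod p → α) :
    Set (Set α) :=
  {S | S = {x | ∃ t, x = f (C t)} ∪ {f V} ∨
       S = {x | ∃ t, x = f (A t)} ∪ {f V} ∨
       ∃ k : ZMod p, k ≠ 0 ∧ S = {x | ∃ t, x = g t k⁻¹} ∪ {f V}}

/-- The line family `𝓛₂ = {C(j,i) : i,j ∈ Z_p}`. -/
def lFam2 {p : ℕ} (f : LpPoint p → α) (g : ZMod p → ZMod p → α) : Set (Set α) :=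
  {S | ∃ i j : ZMod p, S = cSet f g j i}

/-- The line set `𝓛 = 𝓛₁ ∪ 𝓛₂`. -/
def lFam {p : ℕ} [Fact p.Prime] (f : LpPoint p → α) (g : ZMod p → ZMod p → α) :
    Set (Set α) :=
  lFam1 f g ∪ lFam2 f g

end HarmonicPaper

namespace Matroid

variable {α : Type*} {M : Matroid α} {T T' : Set α} {w w' x : α}

lemma mem_closure_singleton_of_mem_closure_inter (hT : M.eRk T ≤ 2) (hT' : M.eRk T' ≤ 2)
    (hTT' : 3 ≤ M.eRk (T ∪ T')) (hw : M.IsNonloop w) (hwT : w ∈ M.closure T)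
    (hwT' : w ∈ M.closure T') (hxT : x ∈ M.closure T) (hxT' : x ∈ M.closure T') :
    x ∈ M.closure {w} := by
  have hsubmod := M.eRk_inter_add_eRk_union_le (M.closure T) (M.closure T')
  rw [eRk_closure_eq, eRk_closure_eq, eRk_union_closure_left_eq,
    eRk_union_closure_right_eq] at hsubmod
  have hmeet : M.eRk (M.closure T ∩ M.closure T') ≤ 1 := by
    by_contra! h
    have : (2 : ℕ∞) + 3 ≤ 2 + 2 :=
      (add_le_add (Order.add_one_le_of_lt h) hTT').trans (hsubmod.trans (add_le_add hT hT'))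
    norm_num at this
  by_contra hx
  have hxw : M.eRk (insert x {w}) = 2 := by
    rw [M.eRk_insert_eq_add_one ⟨M.closure_subset_ground T hxT, hx⟩, hw.eRk_eq]
    rfl
  have hxw' : M.eRk (insert x {w}) ≤ 1 :=
    (M.eRk_mono (Set.insert_subset (show x ∈ M.closure T ∩ M.closure T' from ⟨hxT, hxT'⟩)
      (Set.singleton_subset_iff.2 ⟨hwT, hwT'⟩))).trans hmeet
  rw [hxw] at hxw'
  norm_num at hxw'

lemma IsNonloop.eq_of_mem_closure_singleton (hx : M.IsNonloop x) (hw : x ∈ M.closure {w})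
    (hw' : x ∈ M.closure {w'}) (hww' : M.Indep {w, w'}) : w = w' := by
  have hcl : M.closure {w} = M.closure {w'} :=
    (hx.closure_eq_of_mem_closure hw).symm.trans (hx.closure_eq_of_mem_closure hw')
  have hwn : M.IsNonloop w := hx.isNonloop_of_mem_closure hw
  have hwn' : M.IsNonloop w' := hx.isNonloop_of_mem_closure hw'
  exact ((hwn.closure_eq_closure_iff_eq_or_dep hwn').1 hcl).resolve_right (not_not.2 hww')

end Matroid

namespace HarmonicPaper

open LpPoint

section HarmonicClosure

variable {α : Type*} {M : Matroid α} {S T : Set α} {a b c x ℓ : α}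

lemma Hc.mem_closure (h : Hc M a c b x) : x ∈ M.closure {a, c} := by
  obtain ⟨o, q, r, s, -, hx⟩ := h
  have hx' : x ∈ M.closure {a, c} ∩ M.closure {o, r} := by
    rw [hx]
    rfl
  exact hx'.1

lemma Hc.eq_of_isLoop (h : Hc M a c b x) (hℓ : M.IsLoop ℓ) : ℓ = x := by
  obtain ⟨o, q, r, s, -, hx⟩ := h
  have hℓx : ℓ ∈ M.closure {a, c} ∩ M.closure {o, r} := ⟨hℓ.mem_closure _, hℓ.mem_closure _⟩
  rwa [hx, mem_singleton_iff] at hℓx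

lemma subset_hCl (M : Matroid α) (S : Set α) : S ⊆ hCl M S :=
  subset_iUnion (fun n => hIter M n S) 0

lemma hCl_subset (hST : S ⊆ T)
    (hT : ∀ a ∈ T, ∀ b ∈ T, ∀ c ∈ T, ∀ x, Hc M a c b x → x ∈ T) : hCl M S ⊆ T := by
  refine iUnion_subset fun n => ?_
  induction n with
  | zero => exact hST
  | succ n ih =>
    rintro x (hx | ⟨a, ha, b, hb, c, hc, hx⟩)
    exacts [ih hx, hT a (ih ha) b (ih hb) c (ih hc) x hx]

lemma hCl_subset_closure (hS : S ⊆ M.E) : hCl M S ⊆ M.closure S :=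
  hCl_subset (M.subset_closure S hS) fun _ ha _ _ _ hc _ hx =>
    M.closure_subset_closure_of_subset_closure (pair_subset ha hc) hx.mem_closure

lemma hCl_subset_insert_of_isLoop (hℓ : M.IsLoop ℓ) : hCl M S ⊆ insert ℓ S :=
  hCl_subset (subset_insert ℓ S) fun _ _ _ _ _ _ _ hx => Or.inl (hx.eq_of_isLoop hℓ).symm

end HarmonicClosure

section LpGeometry

variable {p : ℕ}

lemma shortLine_mem_lpLines (i j : ZMod p) : {A i, B (i + j), C j} ∈ LpLines p :=
  Or.inr <| Or.inr <| Or.inr ⟨i, j, rfl⟩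

lemma not_subset_lpLine_AAC {a a' c : ZMod p} (h : a ≠ a') :
    ∀ L ∈ LpLines p, ¬ {A a, A a', C c} ⊆ L := by
  rintro L (rfl | rfl | rfl | ⟨i, j, rfl⟩) hL <;> simp [insert_subset_iff] at hL
  grind

lemma not_subset_lpLine_ACC {a c c' : ZMod p} (h : c ≠ c') :
    ∀ L ∈ LpLines p, ¬ {A a, C c, C c'} ⊆ L := by
  rintro L (rfl | rfl | rfl | ⟨i, j, rfl⟩) hL <;> simp [insert_subset_iff] at hL
  grind

lemma not_subset_lpLine_VAC {a c : ZMod p} : ∀ L ∈ LpLines p, ¬ {V, A a, C c} ⊆ L := by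
  rintro L (rfl | rfl | rfl | ⟨i, j, rfl⟩) hL <;> simp [insert_subset_iff] at hL

end LpGeometry

section Embedding

variable {α : Type*} {p : ℕ} {M : Matroid α} {f : LpPoint p → α} {X : Set α} {x : α}
  {i j : ZMod p}

lemma IsLpEmbedding.mem_ground (hf : IsLpEmbedding p M f) (u : LpPoint p) : f u ∈ M.E :=
  hf.2.1 (mem_range_self u)

lemma IsLpEmbedding.image_subset_ground (hf : IsLpEmbedding p M f) (S : Set (LpPoint p)) :
    f '' S ⊆ M.E :=
  (image_subset_range f S).trans hf.2.1

lemma IsLpEmbedding.mem_closure_image (hf : IsLpEmbedding p M f) {u : LpPoint p}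
    {S : Set (LpPoint p)} (hu : u ∈ S) : f u ∈ M.closure (f '' S) :=
  M.subset_closure _ (hf.image_subset_ground S) (mem_image_of_mem f hu)

lemma IsLpEmbedding.indep_pair (hf : IsLpEmbedding p M f) (u v : LpPoint p) :
    M.Indep {f u, f v} := by
  rw [← image_pair]
  exact (hf.2.2 _).1 (Or.inl ((encard_insert_le _ _).trans (by rw [encard_singleton]; rfl)))

lemma IsLpEmbedding.isNonloop (hf : IsLpEmbedding p M f) (u : LpPoint p) : M.IsNonloop (f u) :=
  Matroid.indep_singleton.1 ((hf.indep_pair u u).subset (by simp))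

lemma IsLpEmbedding.eRk_image_le_two (hf : IsLpEmbedding p M f) {L : Set (LpPoint p)}
    (hL : L ∈ LpLines p) : M.eRk (f '' L) ≤ 2 := by
  refine Matroid.eRk_le_iff.2 fun I hIL hI => ?_
  obtain ⟨S, hSL, rfl⟩ := subset_image_iff.1 hIL
  rw [hf.1.injOn.encard_image]
  rcases (hf.2.2 S).2 hI with hS | ⟨-, hS⟩
  exacts [hS, absurd hSL (hS L hL)]

lemma IsLpEmbedding.three_le_eRk (hf : IsLpEmbedding p M f) {a b c : LpPoint p}
    (hab : a ≠ b) (hac : a ≠ c) (hbc : b ≠ c) (habc : ∀ L ∈ LpLines p, ¬ {a, b, c} ⊆ L)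
    (hX : f '' {a, b, c} ⊆ X) : 3 ≤ M.eRk X := by
  have h3 : ({a, b, c} : Set (LpPoint p)).encard = 3 :=
    encard_eq_three.2 ⟨a, b, c, hab, hac, hbc, rfl⟩
  have hI := (hf.2.2 {a, b, c}).1 (Or.inr ⟨h3, habc⟩)
  rw [← h3, ← hf.1.injOn.encard_image]
  exact hI.encard_le_eRk_of_subset hX

lemma IsLpEmbedding.not_mem_closure_shortLine (hf : IsLpEmbedding p M f) {u : LpPoint p}
    (huA : u ≠ A i) (huC : u ≠ C j) (hu : ∀ L ∈ LpLines p, ¬ {u, A i, C j} ⊆ L) :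
    f u ∉ M.closure (f '' {A i, B (i + j), C j}) := by
  intro hmem
  have h3 := hf.three_le_eRk huA huC (by simp) hu (X := M.closure (f '' {A i, B (i + j), C j}))
    (by
      rintro _ ⟨v, hv, rfl⟩
      rcases hv with rfl | rfl | rfl
      exacts [hmem, hf.mem_closure_image (by simp), hf.mem_closure_image (by simp)])
  rw [M.eRk_closure_eq] at h3
  have := h3.trans (hf.eRk_image_le_two (shortLine_mem_lpLines i j))
  norm_num at this

lemma IsLpEmbedding.mem_closure_A_of_mem_closure_shortLines (hf : IsLpEmbedding p M f)
    {c c' : ZMod p} (hc : c ≠ c') (hx : x ∈ M.closure (f '' {A i, B (i + c), C c}))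
    (hx' : x ∈ M.closure (f '' {A i, B (i + c'), C c'})) : x ∈ M.closure {f (A i)} :=
  Matroid.mem_closure_singleton_of_mem_closure_inter
    (hf.eRk_image_le_two (shortLine_mem_lpLines i c))
    (hf.eRk_image_le_two (shortLine_mem_lpLines i c'))
    (hf.three_le_eRk (a := A i) (b := C c) (c := C c') (by simp) (by simp) (by simpa)
      (not_subset_lpLine_ACC hc) (by simp [image_insert_eq, insert_subset_iff]))
    (hf.isNonloop _) (hf.mem_closure_image (by simp)) (hf.mem_closure_image (by simp)) hx hx'

lemma IsLpEmbedding.mem_closure_C_of_mem_closure_shortLines (hf : IsLpEmbedding p M f)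
    {a a' : ZMod p} (ha : a ≠ a') (hx : x ∈ M.closure (f '' {A a, B (a + j), C j}))
    (hx' : x ∈ M.closure (f '' {A a', B (a' + j), C j})) : x ∈ M.closure {f (C j)} :=
  Matroid.mem_closure_singleton_of_mem_closure_inter
    (hf.eRk_image_le_two (shortLine_mem_lpLines a j))
    (hf.eRk_image_le_two (shortLine_mem_lpLines a' j))
    (hf.three_le_eRk (a := A a) (b := A a') (c := C j) (by simpa) (by simp) (by simp)
      (not_subset_lpLine_AAC ha) (by simp [image_insert_eq, insert_subset_iff]))
    (hf.isNonloop _) (hf.mem_closure_image (by simp)) (hf.mem_closure_image (by simp)) hx hx'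

lemma IsLpEmbedding.lineJI_subset_closure (hf : IsLpEmbedding p M f) :
    lineJI M f j i ⊆ M.closure (f '' {A i, B (i + j), C j}) :=
  hCl_subset_closure (hf.image_subset_ground _)

lemma fA_mem_lineJI : f (A i) ∈ lineJI M f j i :=
  subset_hCl M _ (mem_image_of_mem f (by simp))

lemma IsLpEmbedding.fA_mem_lineJI_iff (hf : IsLpEmbedding p M f) {l : ZMod p} :
    f (A l) ∈ lineJI M f j i ↔ l = i := by
  refine ⟨fun h => ?_, fun h => h ▸ fA_mem_lineJI⟩
  by_contra hl
  exact hf.not_mem_closure_shortLine (by simpa) (by simp) (not_subset_lpLine_AAC hl)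
    (hf.lineJI_subset_closure h)

lemma IsLpEmbedding.fV_not_mem_lineJI (hf : IsLpEmbedding p M f) : f V ∉ lineJI M f j i :=
  fun h => hf.not_mem_closure_shortLine (by simp) (by simp) not_subset_lpLine_VAC
    (hf.lineJI_subset_closure h)

end Embedding

section KeyFamily

variable {α : Type*} {p : ℕ} {M : Matroid α} {f : LpPoint p → α} {g : ZMod p → ZMod p → α}
  {s k t k' i j l : ZMod p}

lemma IsKeyFamily.mem_lineJI (hg : IsKeyFamily M f g) (s k i : ZMod p) :
    g s k ∈ lineJI M f (s + k * i) i := by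
  have hmem : g (s + k * i - k * i) k ∈ ⋂ t, lineJI M f (s + k * i + k * t) (i + t) := by
    rw [hg.2.2.1 k i (s + k * i)]
    rfl
  simpa using mem_iInter.1 hmem 0

/-- A loop `ℓ` would be the only point harmonic closure can add. The key lemma for `k = 1` then
gives `[1,s,-1] = ℓ` for all `s` (using `2 ≠ 0`), so `ℓ` lies on every `⟨0,-1,t⟩`, and the key
lemma for `k = 0` makes `ℓ` equal to the nonloop `[1,0,0]`. -/
lemma IsKeyFamily.loopless [Fact p.Prime] (hodd : p ≠ 2) (hf : IsLpEmbedding p M f)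
    (hg : IsKeyFamily M f g) : M.Loopless := by
  refine Matroid.loopless_iff_forall_not_isLoop.2 fun ℓ _ hℓ => ?_
  have hsub (j i : ZMod p) : lineJI M f j i ⊆ insert ℓ (f '' {A i, B (i + j), C j}) :=
    hCl_subset_insert_of_isLoop hℓ
  have htwo : (2 : ZMod p) ≠ 0 := Ring.two_ne_zero ((ZMod.ringChar_zmod_n p).substr hodd)
  have hslope1 (s : ZMod p) : g s 1 = ℓ := by
    by_contra hne
    obtain h0 | ⟨u, hu, hu0⟩ := hsub _ _ (hg.mem_lineJI s 1 0)
    · exact hne h0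
    obtain h1 | ⟨v, hv, hv1⟩ := hsub _ _ (hg.mem_lineJI s 1 1)
    · exact hne h1
    obtain rfl := hf.1 (hv1.trans hu0.symm)
    simp only [mem_insert_iff, mem_singleton_iff] at hu hv
    rcases hu with rfl | rfl | rfl <;> simp at hv
    exact htwo (by linear_combination -hv)
  have hℓ0 : ℓ ∈ ⋂ t, lineJI M f (0 + 0 * t) (0 + t) :=
    mem_iInter.2 fun t => by simpa [hslope1] using hg.mem_lineJI (-t) 1 t
  rw [hg.2.2.1 0 0 0, mul_zero, sub_zero, hg.1, mem_singleton_iff] at hℓ0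
  exact (hf.isNonloop (C 0)).not_isLoop (hℓ0 ▸ hℓ)

/-- If `s ≠ j - ki`, the line `⟨j,-1,i⟩` meets two lines of the pencil `⟨s+kt,-1,t⟩` through
`[1,s,-k]` in `[0,i,1]` and in `[1,j,0]` (for `k = 0` the point is `[1,s,0]` itself), so the nonloop
`[1,s,-k]` would be parallel to two independent points. -/
lemma IsKeyFamily.mem_lineJI_iff [Fact p.Prime] (hodd : p ≠ 2) (hf : IsLpEmbedding p M f)
    (hg : IsKeyFamily M f g) : g s k ∈ lineJI M f j i ↔ s = j - k * i := by
  refine ⟨fun hx => ?_, fun h => by simpa [h] using hg.mem_lineJI s k i⟩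
  by_contra hs
  have hsi : s + k * i ≠ j := fun h => hs (by rw [← h]; ring)
  have hx' := hf.lineJI_subset_closure hx
  have := hg.loopless hodd hf
  have hnl : M.IsNonloop (g s k) := Matroid.isNonloop_of_loopless (M.closure_subset_ground _ hx')
  have hA : g s k ∈ M.closure {f (A i)} :=
    hf.mem_closure_A_of_mem_closure_shortLines hsi
      (hf.lineJI_subset_closure (hg.mem_lineJI s k i)) hx'
  obtain ⟨w, hwA, hw⟩ : ∃ w, A i ≠ w ∧ g s k ∈ M.closure {f w} := by
    by_cases hk : k = 0
    · refine ⟨C s, by simp, ?_⟩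
      rw [hk, hg.1]
      exact M.mem_closure_self _ (hf.mem_ground _)
    · set I := k⁻¹ * (j - s)
      have hI : s + k * I = j := by simp [I, mul_inv_cancel_left₀ hk]
      have hIi : I ≠ i := fun h => hsi (h ▸ hI)
      have hxI := hf.lineJI_subset_closure (hg.mem_lineJI s k I)
      rw [hI] at hxI
      exact ⟨C j, by simp, hf.mem_closure_C_of_mem_closure_shortLines hIi hxI hx'⟩
  exact hf.1.ne hwA (hnl.eq_of_mem_closure_singleton hA hw (hf.indep_pair _ _))

lemma IsKeyFamily.eq_and_eq_of_eq [Fact p.Prime] (hodd : p ≠ 2) (hf : IsLpEmbedding p M f)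
    (hg : IsKeyFamily M f g) (h : g s k = g t k') : s = t ∧ k = k' := by
  have hslope (I : ZMod p) : s = t + k' * I - k * I :=
    (hg.mem_lineJI_iff hodd hf).1 (h ▸ hg.mem_lineJI t k' I)
  have h0 := hslope 0
  have h1 := hslope 1
  exact ⟨by simpa using h0, by linear_combination h1 - h0⟩

lemma IsKeyFamily.ne_fA [Fact p.Prime] (hodd : p ≠ 2) (hf : IsLpEmbedding p M f)
    (hg : IsKeyFamily M f g) : g s k ≠ f (A l) := by
  intro h
  have hA : f (A l) ∈ lineJI M f (s + k * l + 1) l := fA_mem_lineJI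
  rw [← h, hg.mem_lineJI_iff hodd hf] at hA
  exact one_ne_zero (by linear_combination -hA)

lemma IsKeyFamily.ne_fV (hf : IsLpEmbedding p M f) (hg : IsKeyFamily M f g) : g s k ≠ f V :=
  fun h => hf.fV_not_mem_lineJI (h ▸ hg.mem_lineJI s k 0)

end KeyFamily

section Coordinates

variable {α : Type*} {p : ℕ} {M : Matroid α} {f : LpPoint p → α} {g : ZMod p → ZMod p → α}
  {pt : α} {x y z : ZMod p}

def HasCoords (f : LpPoint p → α) (g : ZMod p → ZMod p → α) (pt : α) (x y z : ZMod p) :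
    Prop :=
  (∃ s k : ZMod p, pt = g s k ∧ x = 1 ∧ y = s ∧ z = -k) ∨
  (∃ l : ZMod p, pt = f (A l) ∧ x = 0 ∧ y = l ∧ z = 1) ∨
  (pt = f V ∧ x = 0 ∧ y = 1 ∧ z = 0)

lemma HasCoords.mem_lineC_iff [Fact p.Prime] (hodd : p ≠ 2) (hf : IsLpEmbedding p M f)
    (hg : IsKeyFamily M f g) (hpt : HasCoords f g pt x y z) :
    pt ∈ {e | ∃ t, e = f (C t)} ∪ {f V} ↔ z = 0 := by
  rcases hpt with ⟨_, k, rfl, rfl, rfl, rfl⟩ | ⟨_, rfl, rfl, rfl, rfl⟩ | ⟨rfl, rfl, rfl, rfl⟩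
  · simp only [mem_union, mem_ofPred_eq, mem_singleton_iff, hg.ne_fV hf, or_false, neg_eq_zero]
    constructor
    · rintro ⟨t, ht⟩
      rw [← hg.1 t] at ht
      exact (hg.eq_and_eq_of_eq hodd hf ht).2
    · rintro rfl
      exact ⟨y, hg.1 y⟩
  · simp [hf.1.eq_iff]
  · simp

lemma HasCoords.mem_lineA_iff [Fact p.Prime] (hodd : p ≠ 2) (hf : IsLpEmbedding p M f)
    (hg : IsKeyFamily M f g) (hpt : HasCoords f g pt x y z) :
    pt ∈ {e | ∃ t, e = f (A t)} ∪ {f V} ↔ x = 0 := by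
  rcases hpt with ⟨_, k, rfl, rfl, rfl, rfl⟩ | ⟨_, rfl, rfl, rfl, rfl⟩ | ⟨rfl, rfl, rfl, rfl⟩
  · simp [hg.ne_fV hf, hg.ne_fA hodd hf]
  · simp [hf.1.eq_iff]
  · simp

lemma HasCoords.mem_lineG_iff [Fact p.Prime] (hodd : p ≠ 2) (hf : IsLpEmbedding p M f)
    (hg : IsKeyFamily M f g) {c : ZMod p} (hc : c ≠ 0) (hpt : HasCoords f g pt x y z) :
    pt ∈ {e | ∃ t, e = g t c⁻¹} ∪ {f V} ↔ x + c * z = 0 := by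
  rcases hpt with ⟨_, k, rfl, rfl, rfl, rfl⟩ | ⟨_, rfl, rfl, rfl, rfl⟩ | ⟨rfl, rfl, rfl, rfl⟩
  · simp only [mem_union, mem_ofPred_eq, mem_singleton_iff, hg.ne_fV hf, or_false]
    constructor
    · rintro ⟨t, ht⟩
      rw [(hg.eq_and_eq_of_eq hodd hf ht).2, mul_neg, mul_inv_cancel₀ hc, add_neg_cancel]
    · intro h
      exact ⟨y, by rw [eq_inv_of_mul_eq_one_right (by linear_combination -h : c * k = 1)]⟩
  · simp [hc, hf.1.eq_iff, fun t => (hg.ne_fA hodd hf (s := t) (k := c⁻¹) (l := y)).symm]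
  · simp

lemma HasCoords.mem_lineJI_iff [Fact p.Prime] (hodd : p ≠ 2) (hf : IsLpEmbedding p M f)
    (hg : IsKeyFamily M f g) {i j : ZMod p} (hpt : HasCoords f g pt x y z) :
    pt ∈ lineJI M f j i ↔ j * x - y + i * z = 0 := by
  rcases hpt with ⟨_, k, rfl, rfl, rfl, rfl⟩ | ⟨_, rfl, rfl, rfl, rfl⟩ | ⟨rfl, rfl, rfl, rfl⟩
  · rw [hg.mem_lineJI_iff hodd hf]
    constructor <;> intro h <;> linear_combination -h
  · rw [hf.fA_mem_lineJI_iff]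
    constructor <;> intro h <;> linear_combination -h
  · simp [hf.fV_not_mem_lineJI]

end Coordinates

theorem statement_8_general {α : Type*} (p : ℕ) [Fact p.Prime] (hodd : p ≠ 2)
    (M : Matroid α) (f : LpPoint p → α) (hf : IsLpEmbedding p M f)
    (g : ZMod p → ZMod p → α) (hg : IsKeyFamily M f g) :
    ∀ (pt : α) (px py pz : ZMod p),
      -- `pt` is a point of `P` with homogeneous coordinates `[px, py, pz]`
      ((∃ s k : ZMod p, pt = g s k ∧ px = 1 ∧ py = s ∧ pz = -k) ∨
       (∃ l : ZMod p, pt = f (A l) ∧ px = 0 ∧ py = l ∧ pz = 1) ∨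
       (pt = f V ∧ px = 0 ∧ py = 1 ∧ pz = 0)) →
      ∀ (L : Set α) (a b c : ZMod p),
        -- `L` is the set `⟨a,b,c⟩`
        ((L = {x | ∃ t, x = f (C t)} ∪ {f V} ∧ a = 0 ∧ b = 0 ∧ c = 1) ∨
         (L = {x | ∃ t, x = f (A t)} ∪ {f V} ∧ a = 1 ∧ b = 0 ∧ c = 0) ∨
         (∃ k : ZMod p, k ≠ 0 ∧ L = {x | ∃ t, x = g t k⁻¹} ∪ {f V} ∧
            a = 1 ∧ b = 0 ∧ c = k) ∨
         (∃ i j : ZMod p, L = lineJI M f j i ∧ a = j ∧ b = -1 ∧ c = i)) →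
        (pt ∈ L ↔ a * px + b * py + c * pz = 0) := by
  intro pt px py pz hpt L a b c hL
  rcases hL with ⟨rfl, rfl, rfl, rfl⟩ | ⟨rfl, rfl, rfl, rfl⟩ |
    ⟨k, hk, rfl, rfl, rfl, rfl⟩ | ⟨i, j, rfl, rfl, rfl, rfl⟩
  · rw [HasCoords.mem_lineC_iff hodd hf hg hpt]
    ring_nf
  · rw [HasCoords.mem_lineA_iff hodd hf hg hpt]
    ring_nf
  · rw [HasCoords.mem_lineG_iff hodd hf hg hk hpt]
    ring_nf
  · rw [HasCoords.mem_lineJI_iff hodd hf hg hpt]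
    ring_nf

theorem statement_8 {α : Type*} (p : ℕ) [Fact p.Prime] (hodd : p ≠ 2)
    (M : Matroid α) (hM : IsHarmonic M) (f : LpPoint p → α) (hf : IsLpEmbedding p M f)
    (g : ZMod p → ZMod p → α) (hg : IsKeyFamily M f g) :
    ∀ (pt : α) (px py pz : ZMod p),
      -- `pt` is a point of `P` with homogeneous coordinates `[px, py, pz]`
      ((∃ s k : ZMod p, pt = g s k ∧ px = 1 ∧ py = s ∧ pz = -k) ∨
       (∃ l : ZMod p, pt = f (A l) ∧ px = 0 ∧ py = l ∧ pz = 1) ∨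
       (pt = f V ∧ px = 0 ∧ py = 1 ∧ pz = 0)) →
      ∀ (L : Set α) (a b c : ZMod p),
        -- `L` is the set `⟨a,b,c⟩`
        ((L = {x | ∃ t, x = f (C t)} ∪ {f V} ∧ a = 0 ∧ b = 0 ∧ c = 1) ∨
         (L = {x | ∃ t, x = f (A t)} ∪ {f V} ∧ a = 1 ∧ b = 0 ∧ c = 0) ∨
         (∃ k : ZMod p, k ≠ 0 ∧ L = {x | ∃ t, x = g t k⁻¹} ∪ {f V} ∧
            a = 1 ∧ b = 0 ∧ c = k) ∨
         (∃ i j : ZMod p, L = lineJI M f j i ∧ a = j ∧ b = -1 ∧ c = i)) →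
        (pt ∈ L ↔ a * px + b * py + c * pz = 0) :=
  statement_8_general p hodd M f hf g hg

end HarmonicPaper
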